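/- arXiv:2502.13523 — 5 statements merged into one kernel-verified Lean document; each statement's English description precedes it below -/
import Mathlib

section
/- Let z : [0, T] → ℂ be a continuous function with z(t) ≠ 0 for all t ∈ [0, T], and let Φ : [0, T] → ℝ be a continuous argument of z. Then the set {t ∈ [0, T] : Re(z(t)) = 0} has at least ⌊|Φ(T) − Φ(0)|/π⌋ elements. -/
/-! The cosine has at least `⌊(b - a) / π⌋` zeros in `[a, b]`. By the intermediate value theorem
`Φ` attains each such zero lying between `Φ 0` and `Φ T`, and wherever `cos (Φ t) = 0` we get
`Re (z t) = ‖z t‖ * cos (Φ t) = 0`. -/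

open Set Real

lemma exists_finset_subset_Icc_cos_eq_zero (a b : ℝ) :
    ∃ S : Finset ℝ, ↑S ⊆ Icc a b ∧ (∀ x ∈ S, cos x = 0) ∧ ⌊(b - a) / π⌋₊ ≤ S.card := by
  -- the zeros `π / 2 + n * π` of `cos`, starting from the first one that is `≥ a`
  set m : ℤ := ⌈(a - π / 2) / π⌉
  let c : ℕ → ℝ := fun k => π / 2 + (m + k) * π
  have hc_inj : c.Injective := fun k l h => by simpa [c, pi_ne_zero] using h
  refine ⟨(Finset.range ⌊(b - a) / π⌋₊).image c, ?_, ?_, ?_⟩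
  · intro x hx
    obtain ⟨k, hk, rfl⟩ : ∃ k < ⌊(b - a) / π⌋₊, c k = x := by simpa using hx
    have hm_lo : a - π / 2 ≤ m * π := (div_le_iff₀ pi_pos).1 (Int.le_ceil _)
    have hm_hi : (m - 1) * π < a - π / 2 :=
      (lt_div_iff₀ pi_pos).1 (sub_lt_iff_lt_add.2 (Int.ceil_lt_add_one _))
    have hk_le : (k + 1) * π ≤ b - a := by
      have := (Nat.le_floor_iff' k.succ_ne_zero).1 (Nat.succ_le_of_lt hk)
      rwa [Nat.cast_succ, le_div_iff₀ pi_pos] at this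
    have hkπ : 0 ≤ (k : ℝ) * π := by positivity
    constructor <;> simp only [c] <;> nlinarith
  · simp only [Finset.mem_image, Finset.mem_range]
    rintro x ⟨k, -, rfl⟩
    exact cos_eq_zero_iff.2 ⟨m + k, by push_cast; ring⟩
  · rw [Finset.card_image_of_injective _ hc_inj, Finset.card_range]

theorem stmt0_general (T : ℝ) (hT : 0 ≤ T) (z : ℝ → ℂ) (Φ : ℝ → ℝ)
    (hΦ_cont : ContinuousOn Φ (Icc 0 T))
    (hΦ_arg : ∀ t ∈ Icc 0 T,
      z t = (‖z t‖ : ℂ) * Complex.exp ((Φ t : ℂ) * Complex.I)) :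
    ∃ F : Finset ℝ, ↑F ⊆ {t ∈ Icc 0 T | (z t).re = 0} ∧
      ⌊|Φ T - Φ 0| / Real.pi⌋₊ ≤ F.card := by
  obtain ⟨S, hS_sub, hS_cos, hS_card⟩ :=
    exists_finset_subset_Icc_cos_eq_zero (min (Φ 0) (Φ T)) (max (Φ 0) (Φ T))
  have hΦ_surj : uIcc (Φ 0) (Φ T) ⊆ Φ '' Icc 0 T := by
    have := intermediate_value_uIcc (f := Φ) (by rwa [uIcc_of_le hT])
    rwa [uIcc_of_le hT] at this
  obtain ⟨F, hF_sub, rfl⟩ := Finset.subset_set_image_iff.1 (hS_sub.trans hΦ_surj)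
  refine ⟨F, fun t ht => ⟨hF_sub ht, ?_⟩, ?_⟩
  · have hcos : cos (Φ t) = 0 := hS_cos _ (Finset.mem_image_of_mem Φ ht)
    rw [hΦ_arg t (hF_sub ht), Complex.re_ofReal_mul, Complex.exp_ofReal_mul_I_re, hcos,
      mul_zero]
  · rw [max_sub_min_eq_abs', abs_sub_comm] at hS_card
    exact hS_card.trans Finset.card_image_le

/-- If `z : [0,T] → ℂ` is continuous and nonvanishing and `Φ` is a continuous
argument of `z` on `[0,T]`, then the set of zeros of `Re (z t)` in `[0,T]` has at least
`⌊|Φ T − Φ 0| / π⌋` elements. -/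
theorem stmt0 (T : ℝ) (hT : 0 ≤ T) (z : ℝ → ℂ) (Φ : ℝ → ℝ)
    (hz_cont : ContinuousOn z (Icc 0 T))
    (hz_ne : ∀ t ∈ Icc 0 T, z t ≠ 0)
    (hΦ_cont : ContinuousOn Φ (Icc 0 T))
    (hΦ_arg : ∀ t ∈ Icc 0 T,
      z t = (‖z t‖ : ℂ) * Complex.exp ((Φ t : ℂ) * Complex.I)) :
    ∃ F : Finset ℝ, ↑F ⊆ {t ∈ Icc 0 T | (z t).re = 0} ∧
      ⌊|Φ T - Φ 0| / Real.pi⌋₊ ≤ F.card :=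
  stmt0_general T hT z Φ hΦ_cont hΦ_arg
end

section
/- Let z : [0, ∞) → ℂ be a continuous function with z(t) ≠ 0 for all t ≥ 0, let Φ : [0, ∞) → ℝ be a continuous argument of z, and suppose the limit Ω := lim_{T→∞} Φ(T)/T exists and Ω ≠ 0. Then for every real c with 0 < c < |Ω|/π there exists T₀ > 0 such that for all T ≥ T₀ the set {t ∈ [0, T] : Re(z(t)) = 0} is infinite or has cardinality at least c·T. -/
/-!
Since `Re z = ‖z‖ cos Φ`, the real part of `z` vanishes wherever `Φ` meets the lattice
`π/2 + πℤ`. By the intermediate value theorem `Φ` meets every lattice point between `Φ 0` and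
`Φ T`, and there are at least `|Φ T - Φ 0| / π - 1` of them. Because `Φ T / T → Ω`, this count
eventually exceeds `c T` whenever `c π < |Ω|`.
-/

open Set Filter Topology

lemma natCast_le_encard_progression_inter_Icc {p : ℝ} (hp : 0 < p) (θ x : ℝ) (N : ℕ) :
    (N : ℕ∞) ≤ ({y | ∃ k : ℤ, y = θ + k * p} ∩ Icc x (x + N * p)).encard := by
  set m : ℤ := ⌈(x - θ) / p⌉
  have hm_ge : x ≤ θ + m * p := by
    have := Int.le_ceil ((x - θ) / p)
    rw [div_le_iff₀ hp] at this
    linarith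
  have hm_lt : θ + m * p < x + p := by
    have := Int.ceil_lt_add_one ((x - θ) / p)
    rw [← sub_lt_iff_lt_add, lt_div_iff₀ hp] at this
    linarith
  set g : ℕ → ℝ := fun i => θ + (m + i) * p
  have hg_inj : Function.Injective g := fun i j hij => by
    simpa [g, hp.ne'] using hij
  have hg_maps :
      g '' (Finset.range N : Set ℕ) ⊆ {y | ∃ k : ℤ, y = θ + k * p} ∩ Icc x (x + N * p) := by
    rintro _ ⟨i, hi, rfl⟩
    have hiN : (i : ℝ) + 1 ≤ N := by exact_mod_cast Finset.mem_range.mp hi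
    refine ⟨⟨m + i, by push_cast; ring⟩, ?_, ?_⟩
    · nlinarith [i.cast_nonneg (α := ℝ)]
    · nlinarith
  calc (N : ℕ∞) = (g '' (Finset.range N : Set ℕ)).encard := by
        rw [hg_inj.encard_image, encard_coe_eq_coe_finsetCard, Finset.card_range]
    _ ≤ _ := encard_le_encard hg_maps

lemma encard_inter_uIcc_le_encard_preimage {f : ℝ → ℝ} {a b : ℝ}
    (hf : ContinuousOn f (uIcc a b)) (Y : Set ℝ) :
    (Y ∩ uIcc (f a) (f b)).encard ≤ {t ∈ uIcc a b | f t ∈ Y}.encard := by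
  calc (Y ∩ uIcc (f a) (f b)).encard ≤ (f '' {t ∈ uIcc a b | f t ∈ Y}).encard := by
        refine encard_le_encard fun y ⟨hyY, hy⟩ => ?_
        obtain ⟨t, ht, rfl⟩ := intermediate_value_uIcc hf hy
        exact ⟨t, ⟨ht, hyY⟩, rfl⟩
    _ ≤ _ := encard_image_le f _

lemma natCast_le_encard_cos_eq_zero {Φ : ℝ → ℝ} {a b : ℝ} (hΦ : ContinuousOn Φ (uIcc a b))
    {N : ℕ} (hN : N * Real.pi ≤ |Φ b - Φ a|) :
    (N : ℕ∞) ≤ {t ∈ uIcc a b | Real.cos (Φ t) = 0}.encard := by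
  set x := min (Φ a) (Φ b)
  have hprog : {y | ∃ k : ℤ, y = Real.pi / 2 + k * Real.pi} ⊆ {y | Real.cos y = 0} := by
    rintro _ ⟨k, rfl⟩
    exact Real.cos_eq_zero_iff.mpr ⟨k, by ring⟩
  have hIcc : Icc x (x + N * Real.pi) ⊆ uIcc (Φ a) (Φ b) := by
    refine Icc_subset_Icc le_rfl ?_
    rw [← max_sub_min_eq_abs] at hN
    linarith
  calc (N : ℕ∞)
      ≤ ({y | ∃ k : ℤ, y = Real.pi / 2 + k * Real.pi} ∩ Icc x (x + N * Real.pi)).encard :=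
        natCast_le_encard_progression_inter_Icc Real.pi_pos _ _ _
    _ ≤ ({y | Real.cos y = 0} ∩ uIcc (Φ a) (Φ b)).encard :=
        encard_le_encard (inter_subset_inter hprog hIcc)
    _ ≤ _ := encard_inter_uIcc_le_encard_preimage hΦ _

lemma eventually_mul_add_le_abs_of_tendsto_div {f : ℝ → ℝ} {Ω r : ℝ}
    (hf : Tendsto (fun T => f T / T) atTop (𝓝 Ω)) (hr : r < |Ω|) (C : ℝ) :
    ∀ᶠ T in atTop, r * T + C ≤ |f T| := by
  have hlim : Tendsto (fun T => |f T / T| - C / T) atTop (𝓝 |Ω|) := by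
    simpa using hf.abs.sub (tendsto_const_nhds.div_atTop tendsto_id)
  filter_upwards [hlim.eventually (lt_mem_nhds hr), eventually_gt_atTop 0] with T hT hT0
  rw [abs_div, abs_of_pos hT0, ← sub_div, lt_div_iff₀ hT0] at hT
  linarith

theorem stmt1_general (z : ℝ → ℂ) (Φ : ℝ → ℝ) (Ω : ℝ)
    (hΦ_cont : ContinuousOn Φ (Ici 0))
    (hΦ_arg : ∀ t : ℝ, 0 ≤ t →
      z t = ((‖z t‖ : ℝ) : ℂ) * Complex.exp ((Φ t : ℂ) * Complex.I))
    (hΩ : Tendsto (fun T => Φ T / T) atTop (nhds Ω))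
    (c : ℝ) (hc0 : 0 < c) (hc : c < |Ω| / Real.pi) :
    ∃ T₀ > (0 : ℝ), ∀ T ≥ T₀,
      {t ∈ Icc 0 T | (z t).re = 0}.Infinite ∨
        c * T ≤ ({t ∈ Icc 0 T | (z t).re = 0}.ncard : ℝ) := by
  have hcπ : c * Real.pi < |Ω| := (lt_div_iff₀ Real.pi_pos).mp hc
  obtain ⟨T₁, hT₁⟩ := eventually_atTop.mp
    (eventually_mul_add_le_abs_of_tendsto_div hΩ hcπ (Real.pi + |Φ 0|))
  refine ⟨max T₁ 1, by positivity, fun T hT => or_iff_not_imp_left.mpr fun hfin => ?_⟩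
  have hT0 : 0 ≤ T := by linarith [le_max_right T₁ 1]
  set N := ⌈c * T⌉₊
  have hN : N * Real.pi ≤ |Φ T - Φ 0| := by
    have hgrowth := hT₁ T (le_of_max_le_left hT)
    have hceil := Nat.ceil_lt_add_one (mul_nonneg hc0.le hT0)
    nlinarith [abs_sub_abs_le_abs_sub (Φ T) (Φ 0), Real.pi_pos]
  have hzeros : {t ∈ uIcc 0 T | Real.cos (Φ t) = 0} ⊆ {t ∈ Icc 0 T | (z t).re = 0} := by
    rintro t ⟨ht, hcos⟩
    rw [uIcc_of_le hT0] at ht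
    refine ⟨ht, ?_⟩
    rw [hΦ_arg t ht.1, Complex.re_ofReal_mul, Complex.exp_ofReal_mul_I_re, hcos, mul_zero]
  have hcount : (N : ℕ∞) ≤ {t ∈ Icc 0 T | (z t).re = 0}.encard :=
    (natCast_le_encard_cos_eq_zero (hΦ_cont.mono (uIcc_of_le hT0 ▸ Icc_subset_Ici_self)) hN).trans
      (encard_le_encard hzeros)
  rw [← (not_infinite.mp hfin).cast_ncard_eq, Nat.cast_le] at hcount
  exact (Nat.le_ceil _).trans (by exact_mod_cast hcount)

/-- If `z : [0,∞) → ℂ` is continuous and nonvanishing, `Φ` is a continuous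
argument of `z`, and the mean motion `Ω = lim_{T→∞} Φ(T)/T` exists and is nonzero, then for
every `0 < c < |Ω|/π` there is `T₀ > 0` such that for all `T ≥ T₀` the set of zeros of
`Re (z t)` in `[0,T]` is infinite or has at least `c·T` elements. -/
theorem stmt1 (z : ℝ → ℂ) (Φ : ℝ → ℝ) (Ω : ℝ)
    (hz_cont : ContinuousOn z (Ici 0))
    (hz_ne : ∀ t : ℝ, 0 ≤ t → z t ≠ 0)
    (hΦ_cont : ContinuousOn Φ (Ici 0))
    (hΦ_arg : ∀ t : ℝ, 0 ≤ t →
      z t = ((‖z t‖ : ℝ) : ℂ) * Complex.exp ((Φ t : ℂ) * Complex.I))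
    (hΩ : Tendsto (fun T => Φ T / T) atTop (nhds Ω)) (hΩ0 : Ω ≠ 0)
    (c : ℝ) (hc0 : 0 < c) (hc : c < |Ω| / Real.pi) :
    ∃ T₀ > (0 : ℝ), ∀ T ≥ T₀,
      {t ∈ Icc 0 T | (z t).re = 0}.Infinite ∨
        c * T ≤ ({t ∈ Icc 0 T | (z t).re = 0}.ncard : ℝ) :=
  stmt1_general z Φ Ω hΦ_cont hΦ_arg hΩ c hc0 hc
end

section
/- Let λ₁ > λ₂ > 0 and a₁ > a₂ > 0 be real numbers, and let m(t) := a₁·cos(λ₁ t) + a₂·cos(λ₂ t). Then for every T > 0 the set Z(T) := {t ∈ [0, T] : m(t) = 0} is finite and satisfies ⌊λ₁ T/π⌋ ≤ card(Z(T)) ≤ λ₁ T/π + 1. -/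
/-! At the grid points `kπ/λ₁` the dominant term `a₁ cos (λ₁ t)` gives `m` the sign `(-1)^k`, so
`m` vanishes in each cell `(kπ/λ₁, (k+1)π/λ₁)`. At a zero, `sin² + cos² = 1` turns `a₂ < a₁` into
`|a₂ sin (λ₂ t)| < |a₁ sin (λ₁ t)|`, so with `λ₂ < λ₁` the derivative `m'` has the sign of
`-sin (λ₁ t)`, which is constant on a cell. All zeros in a cell are thus crossed in the same
direction, so there is only one. Counting the cells that meet `[0, T]` gives the bounds. -/

open Set Filter Topology Real

section ZerosOfDeriv

variable {g g' : ℝ → ℝ} {t a b : ℝ}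

lemma eventually_neg_nhdsGT_of_hasDerivAt (hg : HasDerivAt g (g' t) t) (ht : g t = 0)
    (hd : g' t < 0) : ∀ᶠ x in 𝓝[>] t, g x < 0 := by
  filter_upwards [(hasDerivAt_iff_tendsto_slope_left_right.1 hg).2.eventually_lt_const hd,
    self_mem_nhdsWithin] with x hslope (hx : t < x)
  rw [slope_def_field, ht, sub_zero] at hslope
  exact neg_of_div_neg_left hslope (sub_pos.2 hx).le

lemma eventually_pos_nhdsLT_of_hasDerivAt (hg : HasDerivAt g (g' t) t) (ht : g t = 0)
    (hd : g' t < 0) : ∀ᶠ x in 𝓝[<] t, 0 < g x := by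
  filter_upwards [(hasDerivAt_iff_tendsto_slope_left_right.1 hg).1.eventually_lt_const hd,
    self_mem_nhdsWithin] with x hslope (hx : x < t)
  rw [slope_def_field, ht, sub_zero] at hslope
  exact ((div_neg_iff.1 hslope).resolve_right fun h => h.2.not_gt (sub_neg.2 hx)).1

/-- A zero at which `g` crosses downwards is followed by negative values; the first zero after
them would have to be crossed upwards. -/
theorem subsingleton_zeros_of_hasDerivAt_neg (hg : ∀ x ∈ Ioo a b, HasDerivAt g (g' x) x)
    (hd : ∀ x ∈ Ioo a b, g x = 0 → g' x < 0) : {x ∈ Ioo a b | g x = 0}.Subsingleton := by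
  suffices h : ∀ t ∈ {x ∈ Ioo a b | g x = 0}, ∀ s ∈ {x ∈ Ioo a b | g x = 0}, ¬ t < s from
    fun t ht s hs => le_antisymm (not_lt.1 (h s hs t ht)) (not_lt.1 (h t ht s hs))
  rintro t ⟨ht, hgt⟩ s ⟨hs, hgs⟩ hts
  obtain ⟨v, hgv, hv⟩ := ((eventually_neg_nhdsGT_of_hasDerivAt (hg t ht) hgt (hd t ht hgt)).and
    (Ioo_mem_nhdsGT hts)).exists
  have hsub : Icc v s ⊆ Ioo a b := Icc_subset_Ioo (ht.1.trans hv.1) hs.2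
  have hcont : ContinuousOn g (Icc v s) := fun x hx =>
    (hg x (hsub hx)).continuousAt.continuousWithinAt
  set S := {x ∈ Icc v s | g x = 0}
  have hbdd : BddBelow S := ⟨v, fun x hx => hx.1.1⟩
  have huS : sInf S ∈ S :=
    (hcont.preimage_isClosed_of_isClosed isClosed_Icc isClosed_singleton).csInf_mem
      ⟨s, ⟨hv.2.le, le_rfl⟩, hgs⟩ hbdd
  set u := sInf S
  have hvu : v < u := lt_of_le_of_ne huS.1.1 fun h => hgv.ne (h ▸ huS.2)
  have hu : u ∈ Ioo a b := hsub huS.1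
  obtain ⟨w, hgw, hw⟩ := ((eventually_pos_nhdsLT_of_hasDerivAt (hg u hu) huS.2 (hd u hu huS.2)).and
    (Ioo_mem_nhdsLT hvu)).exists
  obtain ⟨x, hx, hgx⟩ := intermediate_value_Ioo hw.1.le
    (hcont.mono (Icc_subset_Icc_right (hw.2.le.trans huS.1.2))) ⟨hgv, hgw⟩
  have hxS : x ∈ S := ⟨⟨hx.1.le, hx.2.le.trans (hw.2.le.trans huS.1.2)⟩, hgx⟩
  exact (csInf_le hbdd hxS).not_gt (hx.2.trans hw.2)

end ZerosOfDeriv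

lemma Nat.floor_div_eq_iff_mem_Ico {x L : ℝ} (hL : 0 < L) (hx : 0 ≤ x) (k : ℕ) :
    ⌊x / L⌋₊ = k ↔ x ∈ Ico (k * L) ((k + 1) * L) := by
  rw [Nat.floor_eq_iff (div_nonneg hx hL.le), le_div_iff₀ hL, div_lt_iff₀ hL, mem_Ico]

/-- Cells are indexed by `⌊x / L⌋₊`, whose image of `Z` lies between `Iio ⌊T / L⌋₊` and
`Iic ⌊T / L⌋₊`. -/
theorem finite_and_floor_le_ncard_le_of_cells {Z : Set ℝ} {L T : ℝ} (hL : 0 < L)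
    (hZ : Z ⊆ Icc 0 T) (hle : ∀ k : ℕ, (Z ∩ Ico (k * L) ((k + 1) * L)).Subsingleton)
    (hge : ∀ k : ℕ, (k + 1) * L ≤ T → (Z ∩ Ico (k * L) ((k + 1) * L)).Nonempty) :
    Z.Finite ∧ ⌊T / L⌋₊ ≤ Z.ncard ∧ Z.ncard ≤ ⌊T / L⌋₊ + 1 := by
  set K := ⌊T / L⌋₊
  set cell : ℝ → ℕ := fun x => ⌊x / L⌋₊
  have hcell : ∀ x ∈ Z, x ∈ Ico (cell x * L) ((cell x + 1) * L) := fun x hx =>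
    (Nat.floor_div_eq_iff_mem_Ico hL (hZ hx).1 _).1 rfl
  have hinj : InjOn cell Z := fun x hx y hy hxy =>
    hle (cell y) ⟨hx, hxy ▸ hcell x hx⟩ ⟨hy, hcell y hy⟩
  have hmaps : MapsTo cell Z (Iio (K + 1)) := fun x hx =>
    Nat.lt_succ_of_le (Nat.floor_le_floor (div_le_div_of_nonneg_right (hZ hx).2 hL.le))
  have hcover : Iio K ⊆ cell '' Z := by
    intro k hk
    have hkT : (k + 1) * L ≤ T := by
      rw [← le_div_iff₀ hL]
      exact_mod_cast (Nat.le_floor_iff' k.succ_ne_zero).1 hk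
    obtain ⟨x, hxZ, hx⟩ := hge k hkT
    exact ⟨x, hxZ, (Nat.floor_div_eq_iff_mem_Ico hL (hZ hxZ).1 k).2 hx⟩
  have himage : (cell '' Z).Finite := (finite_Iio (K + 1)).subset hmaps.image_subset
  have hncard : Z.ncard = (cell '' Z).ncard := hinj.ncard_image.symm
  refine ⟨himage.of_finite_image hinj, ?_, ?_⟩
  · calc K = (Iio K).ncard := by simp
      _ ≤ Z.ncard := hncard ▸ ncard_le_ncard hcover himage
  · calc Z.ncard ≤ (Iio (K + 1)).ncard := hncard ▸ ncard_le_ncard hmaps.image_subset (finite_Iio _)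
      _ = K + 1 := by simp

lemma neg_one_pow_mul_sin_pos {x : ℝ} (k : ℕ) (hx : x ∈ Ioo (k * π) ((k + 1) * π)) :
    0 < (-1) ^ k * sin x := by
  have hsin : 0 < sin (x - k * π) :=
    sin_pos_of_pos_of_lt_pi (by linarith [hx.1]) (by linarith [hx.2])
  rwa [← sub_add_cancel x (k * π), sin_add_nat_mul_pi, ← mul_assoc, ← sq, pow_right_comm,
    neg_one_sq, one_pow, one_mul]

noncomputable def switchingFunction (a₁ a₂ lam₁ lam₂ t : ℝ) : ℝ :=
  a₁ * cos (lam₁ * t) + a₂ * cos (lam₂ * t)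

section SwitchingFunction

variable {a₁ a₂ lam₁ lam₂ : ℝ}

lemma hasDerivAt_switchingFunction (t : ℝ) :
    HasDerivAt (switchingFunction a₁ a₂ lam₁ lam₂)
      (-(a₁ * lam₁ * sin (lam₁ * t) + a₂ * lam₂ * sin (lam₂ * t))) t := by
  have h₁ := ((hasDerivAt_id t).const_mul lam₁).cos.const_mul a₁
  have h₂ := ((hasDerivAt_id t).const_mul lam₂).cos.const_mul a₂
  exact (h₁.add h₂).congr_deriv (by simp only [id]; ring)

lemma neg_one_pow_mul_switchingFunction_grid_pos (hlam₁ : lam₁ ≠ 0) (ha : |a₂| < a₁) (k : ℕ) :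
    0 < (-1) ^ k * switchingFunction a₁ a₂ lam₁ lam₂ (k * (π / lam₁)) := by
  have hcos : |(-1) ^ k * cos (lam₂ * (k * (π / lam₁)))| ≤ 1 := by
    simpa using abs_cos_le_one (lam₂ * (k * (π / lam₁)))
  have hgrid : lam₁ * (k * (π / lam₁)) = k * π := by field_simp
  have hsq : ((-1 : ℝ) ^ k) ^ 2 = 1 := by rw [pow_right_comm, neg_one_sq, one_pow]
  have hsplit : (-1) ^ k * switchingFunction a₁ a₂ lam₁ lam₂ (k * (π / lam₁)) =
      a₁ + a₂ * ((-1) ^ k * cos (lam₂ * (k * (π / lam₁)))) := by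
    rw [switchingFunction, hgrid, cos_nat_mul_pi]; linear_combination a₁ * hsq
  have hsmall : |a₂ * ((-1) ^ k * cos (lam₂ * (k * (π / lam₁))))| ≤ |a₂| := by
    rw [abs_mul]; exact mul_le_of_le_one_right (abs_nonneg a₂) hcos
  rw [hsplit]
  linarith [neg_abs_le (a₂ * ((-1) ^ k * cos (lam₂ * (k * (π / lam₁)))))]

lemma abs_mul_sin_lt_of_switchingFunction_eq_zero {t : ℝ} (ha : |a₂| < |a₁|)
    (ht : switchingFunction a₁ a₂ lam₁ lam₂ t = 0) :
    |a₂ * sin (lam₂ * t)| < |a₁ * sin (lam₁ * t)| := by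
  rw [← sq_lt_sq, mul_pow, mul_pow, sin_sq, sin_sq]
  have hcos : a₁ * cos (lam₁ * t) = -(a₂ * cos (lam₂ * t)) := by
    rw [switchingFunction] at ht; linarith
  have hsq : a₂ ^ 2 < a₁ ^ 2 := sq_lt_sq.2 ha
  linear_combination hsq + (a₁ * cos (lam₁ * t) - a₂ * cos (lam₂ * t)) * hcos

lemma sin_mul_deriv_switchingFunction_pos {t : ℝ} (hlam : |lam₂| < lam₁) (ha : |a₂| < a₁)
    (ht : switchingFunction a₁ a₂ lam₁ lam₂ t = 0) :
    0 < sin (lam₁ * t) * (a₁ * lam₁ * sin (lam₁ * t) + a₂ * lam₂ * sin (lam₂ * t)) := by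
  set A := a₁ * sin (lam₁ * t)
  set B := a₂ * sin (lam₂ * t)
  have ha₁ : 0 < a₁ := (abs_nonneg a₂).trans_lt ha
  have hBA : |B| < |A| :=
    abs_mul_sin_lt_of_switchingFunction_eq_zero (ha.trans_le (le_abs_self a₁)) ht
  have hA : 0 < |A| := (abs_nonneg B).trans_lt hBA
  have hcross : |lam₂ * (A * B)| < lam₁ * A ^ 2 := by
    rw [abs_mul, abs_mul, ← sq_abs A]
    have hlam₁ : 0 < lam₁ := (abs_nonneg lam₂).trans_lt hlam
    calc |lam₂| * (|A| * |B|) ≤ lam₁ * (|A| * |B|) := by gcongr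
      _ < lam₁ * |A| ^ 2 := by rw [sq]; gcongr
  have hexpand : a₁ * (sin (lam₁ * t) * (a₁ * lam₁ * sin (lam₁ * t) + a₂ * lam₂ * sin (lam₂ * t))) =
      lam₁ * A ^ 2 + lam₂ * (A * B) := by ring
  have hneg := neg_abs_le (lam₂ * (A * B))
  exact pos_of_mul_pos_right (by linarith) ha₁.le

lemma continuous_switchingFunction : Continuous (switchingFunction a₁ a₂ lam₁ lam₂) := by
  unfold switchingFunction; fun_prop

lemma exists_switchingFunction_eq_zero_mem_Ioo (hlam₁ : 0 < lam₁) (ha : |a₂| < a₁) (k : ℕ) :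
    ∃ t ∈ Ioo (k * (π / lam₁)) ((k + 1) * (π / lam₁)), switchingFunction a₁ a₂ lam₁ lam₂ t = 0 := by
  have hleft := neg_one_pow_mul_switchingFunction_grid_pos (lam₂ := lam₂) hlam₁.ne' ha k
  have hright := neg_one_pow_mul_switchingFunction_grid_pos (lam₂ := lam₂) hlam₁.ne' ha (k + 1)
  rw [pow_succ, Nat.cast_succ, mul_neg_one, neg_mul] at hright
  have hcell : k * (π / lam₁) ≤ (k + 1) * (π / lam₁) := by
    gcongr; linarith
  obtain ⟨t, ht, hmt⟩ := intermediate_value_Ioo' hcell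
    (continuous_const.mul continuous_switchingFunction).continuousOn ⟨neg_pos.1 hright, hleft⟩
  exact ⟨t, ht, (mul_eq_zero.1 hmt).resolve_left (pow_ne_zero k (by norm_num))⟩

lemma subsingleton_switchingFunction_zeros_Ioo (hlam : |lam₂| < lam₁) (ha : |a₂| < a₁) (k : ℕ) :
    {t ∈ Ioo (k * (π / lam₁)) ((k + 1) * (π / lam₁)) |
      switchingFunction a₁ a₂ lam₁ lam₂ t = 0}.Subsingleton := by
  have hlam₁ : 0 < lam₁ := (abs_nonneg lam₂).trans_lt hlam
  have hε : (-1 : ℝ) ^ k ≠ 0 := pow_ne_zero k (by norm_num)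
  have hsigned : {t ∈ Ioo (k * (π / lam₁)) ((k + 1) * (π / lam₁)) |
      (-1) ^ k * switchingFunction a₁ a₂ lam₁ lam₂ t = 0}.Subsingleton := by
    refine subsingleton_zeros_of_hasDerivAt_neg
      (fun t _ => (hasDerivAt_switchingFunction t).const_mul ((-1) ^ k)) ?_
    rintro u ⟨hu₁, hu₂⟩ hmu
    replace hmu : switchingFunction a₁ a₂ lam₁ lam₂ u = 0 := (mul_eq_zero.1 hmu).resolve_left hε
    rw [← mul_div_assoc, div_lt_iff₀' hlam₁] at hu₁
    rw [← mul_div_assoc, lt_div_iff₀' hlam₁] at hu₂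
    have hsin := neg_one_pow_mul_sin_pos k ⟨hu₁, hu₂⟩
    have hprod := sin_mul_deriv_switchingFunction_pos hlam ha hmu
    have hA : 0 < (-1) ^ k * (a₁ * lam₁ * sin (lam₁ * u) + a₂ * lam₂ * sin (lam₂ * u)) :=
      pos_of_mul_pos_left (by linear_combination mul_pos hsin hprod) (sq_nonneg (sin (lam₁ * u)))
    linarith
  refine hsigned.anti ?_
  rintro t ⟨ht, hmt⟩
  exact ⟨ht, by simp only [hmt, mul_zero]⟩

lemma subsingleton_switchingFunction_zeros_Ico (hlam : |lam₂| < lam₁) (ha : |a₂| < a₁) (k : ℕ) :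
    ({t | switchingFunction a₁ a₂ lam₁ lam₂ t = 0} ∩
      Ico (k * (π / lam₁)) ((k + 1) * (π / lam₁))).Subsingleton := by
  have hlam₁ : 0 < lam₁ := (abs_nonneg lam₂).trans_lt hlam
  refine (subsingleton_switchingFunction_zeros_Ioo hlam ha k).anti ?_
  rintro t ⟨hmt : switchingFunction a₁ a₂ lam₁ lam₂ t = 0, htk, htk'⟩
  refine ⟨⟨lt_of_le_of_ne htk ?_, htk'⟩, hmt⟩
  rintro rfl
  exact (neg_one_pow_mul_switchingFunction_grid_pos hlam₁.ne' ha k).ne' (by rw [hmt, mul_zero])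

end SwitchingFunction

/-- For `λ₁ > λ₂ > 0` and `a₁ > a₂ > 0`, the set of zeros of
`m(t) = a₁ cos(λ₁ t) + a₂ cos(λ₂ t)` in `[0,T]` is finite with
`⌊λ₁T/π⌋ ≤ card ≤ λ₁T/π + 1`. -/
theorem stmt4 (lam₁ lam₂ a₁ a₂ : ℝ)
    (hlam : lam₂ < lam₁) (hlam₂ : 0 < lam₂)
    (ha : a₂ < a₁) (ha₂ : 0 < a₂)
    (T : ℝ) (hT : 0 < T) :
    {t ∈ Icc 0 T | a₁ * Real.cos (lam₁ * t) + a₂ * Real.cos (lam₂ * t) = 0}.Finite ∧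
    ⌊lam₁ * T / Real.pi⌋₊ ≤
      {t ∈ Icc 0 T | a₁ * Real.cos (lam₁ * t) + a₂ * Real.cos (lam₂ * t) = 0}.ncard ∧
    ({t ∈ Icc 0 T | a₁ * Real.cos (lam₁ * t) + a₂ * Real.cos (lam₂ * t) = 0}.ncard : ℝ) ≤
      lam₁ * T / Real.pi + 1 := by
  have hlam₁ : 0 < lam₁ := hlam₂.trans hlam
  have hlam' : |lam₂| < lam₁ := by rwa [abs_of_pos hlam₂]
  have ha' : |a₂| < a₁ := by rwa [abs_of_pos ha₂]
  set Z := {t ∈ Icc 0 T | switchingFunction a₁ a₂ lam₁ lam₂ t = 0}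
  have hle : ∀ k : ℕ, (Z ∩ Ico (k * (π / lam₁)) ((k + 1) * (π / lam₁))).Subsingleton := fun k =>
    (subsingleton_switchingFunction_zeros_Ico hlam' ha' k).anti fun t ht => ⟨ht.1.2, ht.2⟩
  have hge : ∀ k : ℕ, (k + 1) * (π / lam₁) ≤ T →
      (Z ∩ Ico (k * (π / lam₁)) ((k + 1) * (π / lam₁))).Nonempty := by
    intro k hk
    obtain ⟨t, ht, hmt⟩ := exists_switchingFunction_eq_zero_mem_Ioo (lam₂ := lam₂) hlam₁ ha' k
    have hk₀ : (0 : ℝ) ≤ k * (π / lam₁) := by positivity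
    exact ⟨t, ⟨⟨hk₀.trans ht.1.le, ht.2.le.trans hk⟩, hmt⟩, ht.1.le, ht.2⟩
  obtain ⟨hfin, hlower, hupper⟩ :=
    finite_and_floor_le_ncard_le_of_cells (div_pos pi_pos hlam₁) (sep_subset _ _) hle hge
  rw [show lam₁ * T / π = T / (π / lam₁) by field_simp]
  refine ⟨hfin, hlower, ?_⟩
  calc (Z.ncard : ℝ) ≤ ⌊T / (π / lam₁)⌋₊ + 1 := by exact_mod_cast hupper
    _ ≤ T / (π / lam₁) + 1 := by gcongr; exact Nat.floor_le (by positivity)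
end

section
/- Let λ₁ > λ₂ > 0 and a₁ > a₂ > 0 be real numbers, and let m(t) := a₁·cos(λ₁ t) + a₂·cos(λ₂ t). Then for every nonnegative integer j there exists exactly one t in the closed interval [jπ/λ₁, (j+1)π/λ₁] with m(t) = 0. -/
/-!
On the half-period `[jπ/λ₁, (j+1)π/λ₁]` the function `(-1)^j m` starts at `a₁ ± a₂ > 0` and ends at
`-a₁ ± a₂ < 0`, so it vanishes somewhere. At a zero, `a₁ cos (λ₁ t) = -a₂ cos (λ₂ t)` forces
`|a₁ sin (λ₁ t)| > |a₂ sin (λ₂ t)|`; as `λ₁ ≥ |λ₂|` and `(-1)^j sin (λ₁ t) ≥ 0` on the half-period,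
the derivative of `(-1)^j m` is negative there. A continuous function that only crosses zero
downwards has at most one zero.
-/

open Set Real Filter Topology SignType

theorem subsingleton_zeros_of_deriv_neg {f : ℝ → ℝ} {a b : ℝ} (hf : ContinuousOn f (Icc a b))
    (hd : ∀ x ∈ Icc a b, f x = 0 → deriv f x < 0) : {x ∈ Icc a b | f x = 0}.Subsingleton := by
  suffices no_later_zero : ∀ x ∈ Icc a b, ∀ y ∈ Icc a b, f x = 0 → f y = 0 → ¬x < y from
    fun x hx y hy ↦ le_antisymm (not_lt.1 (no_later_zero y hy.1 x hx.1 hy.2 hx.2))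
      (not_lt.1 (no_later_zero x hx.1 y hy.1 hx.2 hy.2))
  intro x hx y hy hfx hfy hxy
  have hxy_sub : Icc x y ⊆ Icc a b := Icc_subset_Icc hx.1 hy.2
  -- Real induction: `f ≤ 0` propagates to the right of `x`, yet `f > 0` just left of `y`.
  have hnonpos : Icc x y ⊆ {t | f t ≤ 0} := by
    refine IsClosed.Icc_subset_of_forall_mem_nhdsWithin ?_ hfx.le ?_
    · rw [inter_comm]
      exact (hf.mono hxy_sub).preimage_isClosed_of_isClosed isClosed_Icc isClosed_Iic
    rintro t ⟨hft, htx, hty⟩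
    rcases eq_or_lt_of_le (show f t ≤ 0 from hft) with hzero | hneg
    · filter_upwards [nhdsWithin_le_nhds (eventually_nhdsWithin_sign_eq_of_deriv_neg
        (hd t (hxy_sub ⟨htx, hty.le⟩) hzero) hzero), self_mem_nhdsWithin] with s hs (hts : t < s)
      rw [sign_neg (sub_neg.2 hts), sign_eq_neg_one_iff] at hs
      exact hs.le
    · exact nhdsWithin_le_of_mem (Icc_mem_nhdsGT_of_mem ⟨htx, hty⟩)
        ((hf.mono hxy_sub t ⟨htx, hty.le⟩).eventually_le_const hneg)
  obtain ⟨s, hs, hsxy⟩ := ((eventually_nhdsWithin_sign_eq_of_deriv_neg (hd y hy hfy) hfy).filter_mono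
    nhdsWithin_le_nhds |>.and (Ioo_mem_nhdsLT hxy : ∀ᶠ s in 𝓝[<] y, s ∈ Ioo x y)).exists
  rw [sign_pos (sub_pos.2 hsxy.2), sign_eq_one_iff] at hs
  exact (hnonpos (Ioo_subset_Icc_self hsxy) : f s ≤ 0).not_gt hs

theorem abs_mul_sin_lt_of_mul_cos_add_mul_cos_eq_zero {a₁ a₂ x y : ℝ} (ha : |a₂| < |a₁|)
    (h : a₁ * cos x + a₂ * cos y = 0) : |a₂ * sin y| < |a₁ * sin x| := by
  have hsq : (a₁ * sin x) ^ 2 - (a₂ * sin y) ^ 2 = a₁ ^ 2 - a₂ ^ 2 := by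
    linear_combination a₁ ^ 2 * sin_sq_add_cos_sq x - a₂ ^ 2 * sin_sq_add_cos_sq y
      - (a₁ * cos x - a₂ * cos y) * h
  rw [← sq_lt_sq] at ha ⊢
  linarith

theorem neg_one_pow_mul_sin_nonneg {θ : ℝ} {j : ℕ} (h₁ : j * π ≤ θ) (h₂ : θ ≤ (j + 1) * π) :
    0 ≤ (-1) ^ j * sin θ := by
  have hshift := sin_add_nat_mul_pi (θ - j * π) j
  rw [sub_add_cancel] at hshift
  rw [hshift, ← mul_assoc, ← mul_pow, neg_one_mul, neg_neg, one_pow, one_mul]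
  exact sin_nonneg_of_nonneg_of_le_pi (by linarith) (by linarith)

noncomputable def switchingFn (a₁ a₂ lam₁ lam₂ t : ℝ) : ℝ :=
  a₁ * cos (lam₁ * t) + a₂ * cos (lam₂ * t)

section switchingFn

variable {lam₁ lam₂ a₁ a₂ : ℝ}

theorem continuous_switchingFn : Continuous (switchingFn a₁ a₂ lam₁ lam₂) := by
  unfold switchingFn
  fun_prop

theorem hasDerivAt_switchingFn (t : ℝ) :
    HasDerivAt (switchingFn a₁ a₂ lam₁ lam₂)
      (-(a₁ * lam₁ * sin (lam₁ * t) + a₂ * lam₂ * sin (lam₂ * t))) t := by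
  have hcos (lam : ℝ) : HasDerivAt (fun t ↦ cos (lam * t)) (-sin (lam * t) * lam) t :=
    ((hasDerivAt_id t).const_mul lam).cos.congr_deriv (by simp)
  exact (((hcos lam₁).const_mul a₁).add ((hcos lam₂).const_mul a₂)).congr_deriv (by ring)

theorem deriv_neg_one_pow_mul_switchingFn_neg (hlam₁ : 0 < lam₁) (hlam : |lam₂| ≤ lam₁)
    (ha : |a₂| < a₁) {j : ℕ} {t : ℝ} (ht : t ∈ Icc (j * π / lam₁) ((j + 1) * π / lam₁))
    (h0 : switchingFn a₁ a₂ lam₁ lam₂ t = 0) :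
    deriv (fun t ↦ (-1) ^ j * switchingFn a₁ a₂ lam₁ lam₂ t) t < 0 := by
  rw [((hasDerivAt_switchingFn t).const_mul _).deriv]
  set p : ℝ := (-1) ^ j
  set X := a₁ * sin (lam₁ * t)
  set Y := a₂ * sin (lam₂ * t)
  have hsin : 0 ≤ p * sin (lam₁ * t) :=
    neg_one_pow_mul_sin_nonneg (by linarith [(div_le_iff₀ hlam₁).1 ht.1])
      (by linarith [(le_div_iff₀ hlam₁).1 ht.2])
  have hXY : |Y| < |X| :=
    abs_mul_sin_lt_of_mul_cos_add_mul_cos_eq_zero (ha.trans_le (le_abs_self a₁)) h0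
  have hX : p * X = |X| := by
    rw [abs_mul, abs_of_pos ((abs_nonneg a₂).trans_lt ha), ← one_mul |sin _|, ← abs_neg_one_pow j,
      ← abs_mul, abs_of_nonneg hsin]
    ring
  have hY : -(|lam₂| * |Y|) ≤ lam₂ * (p * Y) := by
    simpa [p, abs_mul, abs_neg_one_pow] using neg_abs_le (lam₂ * (p * Y))
  have hexpand : p * -(a₁ * lam₁ * sin (lam₁ * t) + a₂ * lam₂ * sin (lam₂ * t))
      = -(lam₁ * (p * X) + lam₂ * (p * Y)) := by ring
  rw [hexpand, hX]
  linarith [mul_le_mul_of_nonneg_right hlam (abs_nonneg Y), mul_lt_mul_of_pos_left hXY hlam₁]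

theorem neg_one_pow_mul_switchingFn_pos (hlam₁ : lam₁ ≠ 0) (ha : |a₂| < a₁) (j : ℕ) :
    0 < (-1) ^ j * switchingFn a₁ a₂ lam₁ lam₂ (j * π / lam₁) := by
  have hp : ((-1 : ℝ) ^ j) * (-1) ^ j = 1 := by rw [← mul_pow]; norm_num
  have hc : |a₂ * ((-1) ^ j * cos (lam₂ * (j * π / lam₁)))| ≤ |a₂| := by
    rw [abs_mul, abs_mul, abs_neg_one_pow, one_mul]
    exact mul_le_of_le_one_right (abs_nonneg _) (abs_cos_le_one _)
  have hval : (-1) ^ j * switchingFn a₁ a₂ lam₁ lam₂ (j * π / lam₁)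
      = a₁ + a₂ * ((-1) ^ j * cos (lam₂ * (j * π / lam₁))) := by
    rw [switchingFn, mul_div_cancel₀ _ hlam₁, cos_nat_mul_pi]
    linear_combination a₁ * hp
  rw [hval]
  linarith [neg_abs_le (a₂ * ((-1) ^ j * cos (lam₂ * (j * π / lam₁))))]

theorem neg_one_pow_mul_switchingFn_succ_neg (hlam₁ : lam₁ ≠ 0) (ha : |a₂| < a₁) (j : ℕ) :
    (-1) ^ j * switchingFn a₁ a₂ lam₁ lam₂ ((j + 1) * π / lam₁) < 0 := by
  have hp : ((-1 : ℝ) ^ j) * (-1) ^ j = 1 := by rw [← mul_pow]; norm_num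
  have hc : |a₂ * ((-1) ^ j * cos (lam₂ * ((j + 1) * π / lam₁)))| ≤ |a₂| := by
    rw [abs_mul, abs_mul, abs_neg_one_pow, one_mul]
    exact mul_le_of_le_one_right (abs_nonneg _) (abs_cos_le_one _)
  have hval : (-1) ^ j * switchingFn a₁ a₂ lam₁ lam₂ ((j + 1) * π / lam₁)
      = -a₁ + a₂ * ((-1) ^ j * cos (lam₂ * ((j + 1) * π / lam₁))) := by
    rw [switchingFn, mul_div_cancel₀ _ hlam₁, ← Nat.cast_succ, cos_nat_mul_pi, pow_succ]
    linear_combination -a₁ * hp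
  rw [hval]
  linarith [le_abs_self (a₂ * ((-1) ^ j * cos (lam₂ * ((j + 1) * π / lam₁))))]

end switchingFn

/-- For `λ₁ > λ₂ > 0` and `a₁ > a₂ > 0`, the function
`m(t) = a₁ cos(λ₁ t) + a₂ cos(λ₂ t)` has exactly one zero in each half-period
`[jπ/λ₁, (j+1)π/λ₁]` of `cos(λ₁ t)`. -/
theorem stmt6 (lam₁ lam₂ a₁ a₂ : ℝ)
    (hlam : lam₂ < lam₁) (hlam₂ : 0 < lam₂)
    (ha : a₂ < a₁) (ha₂ : 0 < a₂) (j : ℕ) :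
    ∃! t : ℝ, t ∈ Icc ((j : ℝ) * Real.pi / lam₁) (((j : ℝ) + 1) * Real.pi / lam₁) ∧
      a₁ * Real.cos (lam₁ * t) + a₂ * Real.cos (lam₂ * t) = 0 := by
  have hlam₁ : 0 < lam₁ := hlam₂.trans hlam
  have hlam_abs : |lam₂| ≤ lam₁ := (abs_of_pos hlam₂).symm ▸ hlam.le
  have ha_abs : |a₂| < a₁ := (abs_of_pos ha₂).symm ▸ ha
  set f : ℝ → ℝ := fun t ↦ (-1) ^ j * switchingFn a₁ a₂ lam₁ lam₂ t
  have hf : Continuous f := continuous_const.mul continuous_switchingFn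
  have hf_zero {t : ℝ} : f t = 0 ↔ switchingFn a₁ a₂ lam₁ lam₂ t = 0 := by simp [f]
  have hAB : (j : ℝ) * π / lam₁ ≤ (j + 1) * π / lam₁ := by gcongr; linarith
  obtain ⟨t, ht, hft⟩ := intermediate_value_Icc' hAB hf.continuousOn
    ⟨(neg_one_pow_mul_switchingFn_succ_neg hlam₁.ne' ha_abs j).le,
      (neg_one_pow_mul_switchingFn_pos hlam₁.ne' ha_abs j).le⟩
  have hunique := subsingleton_zeros_of_deriv_neg hf.continuousOn fun s hs hfs ↦
    deriv_neg_one_pow_mul_switchingFn_neg hlam₁ hlam_abs ha_abs hs (hf_zero.1 hfs)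
  exact ⟨t, ⟨ht, hf_zero.1 hft⟩, fun s hs ↦ hunique ⟨hs.1, hf_zero.2 hs.2⟩ ⟨ht, hft⟩⟩
end

section
/- Let n ≥ 1 and let ξ ∈ ℝⁿ with ξ ≠ 0. Then (2π)^{−n/2}·∫_{{x ∈ ℝⁿ : ‖x‖ ≤ 1}} cos(⟨x, ξ⟩) dx = ‖ξ‖^{−n/2}·J_{n/2}(‖ξ‖), where for real p ≥ 0 and x > 0, J_p(x) := (x/2)^p / (Γ(p + 1/2)·√π) · ∫₀^π sin^{2p}(φ)·cos(x·cos φ) dφ. -/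
open Set MeasureTheory

/-- The Bessel function of order `p ≥ 0` in its Poisson integral representation. -/
noncomputable def besselJ (p : ℝ) (x : ℝ) : ℝ :=
  (x / 2) ^ p / (Real.Gamma (p + 1 / 2) * Real.sqrt Real.pi) *
    ∫ φ in (0 : ℝ)..Real.pi, Real.sin φ ^ (2 * p) * Real.cos (x * Real.cos φ)

open Real

/-! After a rotation taking `ξ / ‖ξ‖` to the first basis vector, the integrand depends only on
the first coordinate `t`, so by Fubini the integral is `∫_{-1}^{1} cos(‖ξ‖ t)` weighted by the
volume `π^{m/2} (1 - t²)^{m/2} / Γ(m/2 + 1)` of the `m = n - 1`-dimensional slice of the ball.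
The substitution `t = cos φ` turns this into the Poisson integral, and the constants match. -/

theorem preimage_toLp_closedBall_zero {ι : Type*} [Fintype ι] {r : ℝ} (hr : 0 ≤ r) :
    WithLp.toLp 2 ⁻¹' Metric.closedBall (0 : EuclideanSpace ℝ ι) r =
      {y : ι → ℝ | ∑ i, y i ^ 2 ≤ r ^ 2} := by
  ext y
  simp [← sq_le_sq₀ (norm_nonneg _) hr, EuclideanSpace.real_norm_sq_eq]

theorem measureReal_setOf_sum_sq_le {ι : Type*} [Fintype ι] {s : ℝ} (hs : 0 ≤ s) :
    volume.real {y : ι → ℝ | ∑ i, y i ^ 2 ≤ s} =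
      √π ^ Fintype.card ι / Gamma (Fintype.card ι / 2 + 1) * s ^ ((Fintype.card ι : ℝ) / 2) := by
  rcases isEmpty_or_nonempty ι with hι | hι
  · simp [hs, measureReal_def, volume_pi]
  rw [rpow_div_two_eq_sqrt _ hs, rpow_natCast]
  conv_lhs => rw [← sq_sqrt hs]
  rw [← preimage_toLp_closedBall_zero (sqrt_nonneg s),
    (PiLp.volume_preserving_toLp ι).measureReal_preimage measurableSet_closedBall.nullMeasurableSet,
    measureReal_def, EuclideanSpace.volume_closedBall, ENNReal.toReal_mul, ENNReal.toReal_pow,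
    ENNReal.toReal_ofReal (sqrt_nonneg _), ENNReal.toReal_ofReal (by positivity), mul_comm]

theorem setIntegral_prod_comp_fst {X Y : Type*} [MeasurableSpace X] [MeasurableSpace Y]
    {μ : Measure X} {ν : Measure Y} [SFinite μ] [SFinite ν] {T : Set (X × Y)}
    (hT : MeasurableSet T) {g : X → ℝ} (hg : IntegrableOn (fun p ↦ g p.1) T (μ.prod ν)) :
    ∫ p in T, g p.1 ∂μ.prod ν = ∫ x, ν.real (Prod.mk x ⁻¹' T) * g x ∂μ := by
  rw [← integral_indicator hT, integral_prod _ (hg.integrable_indicator hT)]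
  congr 1 with x
  rw [← smul_eq_mul, ← integral_indicator_const _ (hT.preimage measurable_prodMk_left)]
  rfl

theorem isCompact_setOf_sum_sq_le_one (ι : Type*) [Fintype ι] :
    IsCompact {y : ι → ℝ | ∑ i, y i ^ 2 ≤ 1} := by
  rw [← one_pow 2, ← preimage_toLp_closedBall_zero zero_le_one,
    ← image_eq_preimage_of_inverse (f := WithLp.ofLp) (fun _ ↦ rfl) (fun _ ↦ rfl)]
  exact (isCompact_closedBall _ _).image (PiLp.continuous_ofLp 2 _)

theorem setIntegral_setOf_sum_sq_le_one_comp_zero (m : ℕ) {g : ℝ → ℝ} (hg : Continuous g) :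
    ∫ x in {x : Fin (m + 1) → ℝ | ∑ i, x i ^ 2 ≤ 1}, g (x 0) =
      ∫ t, volume.real {y : Fin m → ℝ | ∑ i, y i ^ 2 ≤ 1 - t ^ 2} * g t := by
  let e := MeasurableEquiv.piFinSuccAbove (fun _ : Fin (m + 1) ↦ ℝ) 0
  have he : MeasurePreserving e := volume_preserving_piFinSuccAbove _ 0
  let T : Set (ℝ × (Fin m → ℝ)) := {p | p.1 ^ 2 + ∑ i, p.2 i ^ 2 ≤ 1}
  have hT : MeasurableSet T := by unfold T; measurability
  have hpre : {x : Fin (m + 1) → ℝ | ∑ i, x i ^ 2 ≤ 1} = e ⁻¹' T := by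
    ext x
    simp [e, T, Fin.sum_univ_succ, Fin.tail]
  have hint : IntegrableOn (fun p ↦ g p.1) T (volume.prod volume) := by
    rw [← Measure.volume_eq_prod, ← he.integrableOn_comp_preimage e.measurableEmbedding, ← hpre]
    exact (hg.comp (continuous_apply 0)).continuousOn.integrableOn_compact
      (isCompact_setOf_sum_sq_le_one _)
  rw [hpre]
  refine (he.setIntegral_preimage_emb e.measurableEmbedding (fun p ↦ g p.1) T).trans ?_
  rw [Measure.volume_eq_prod, setIntegral_prod_comp_fst hT hint]
  congr with t
  congr 2 with y
  simp only [T, mem_preimage, mem_ofPred_eq]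
  constructor <;> intro h <;> linarith

theorem setIntegral_closedBall_comp_zero (m : ℕ) {g : ℝ → ℝ} (hg : Continuous g) :
    ∫ x in Metric.closedBall (0 : EuclideanSpace ℝ (Fin (m + 1))) 1, g (x 0) =
      √π ^ m / Gamma (m / 2 + 1) * ∫ t in (-1)..1, (1 - t ^ 2) ^ ((m : ℝ) / 2) * g t := by
  have hslice_empty : ∀ t ∉ Icc (-1 : ℝ) 1, {y : Fin m → ℝ | ∑ i, y i ^ 2 ≤ 1 - t ^ 2} = ∅ := by
    intro t ht
    have : 1 < t ^ 2 := by
      rw [mem_Icc, ← abs_le] at ht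
      exact one_lt_sq_iff_one_lt_abs _ |>.mpr (not_le.mp ht)
    exact eq_empty_of_forall_notMem fun y hy ↦ by
      linarith [hy.out, Finset.sum_nonneg fun i (_ : i ∈ Finset.univ) ↦ sq_nonneg (y i)]
  rw [← (PiLp.volume_preserving_toLp _).setIntegral_preimage_emb
      (MeasurableEquiv.toLp 2 _).measurableEmbedding,
    preimage_toLp_closedBall_zero zero_le_one, one_pow,
    setIntegral_setOf_sum_sq_le_one_comp_zero m hg,
    ← setIntegral_eq_integral_of_forall_compl_eq_zero (s := Icc (-1) 1) fun t ht ↦ by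
      rw [hslice_empty t ht, measureReal_empty, zero_mul],
    integral_Icc_eq_integral_Ioc, ← intervalIntegral.integral_of_le (by norm_num),
    ← intervalIntegral.integral_const_mul]
  refine intervalIntegral.integral_congr fun t ht ↦ ?_
  rw [uIcc_of_le (by norm_num), mem_Icc, ← abs_le, ← sq_le_one_iff_abs_le_one] at ht
  simp only [measureReal_setOf_sum_sq_le (sub_nonneg.mpr ht), Fintype.card_fin]
  ring

theorem intervalIntegral_one_sub_sq_rpow_mul (m : ℕ) {g : ℝ → ℝ} (hg : Continuous g) :
    ∫ t in (-1)..1, (1 - t ^ 2) ^ ((m : ℝ) / 2) * g t =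
      ∫ φ in 0..π, sin φ ^ (m + 1) * g (cos φ) := by
  have hcont : Continuous fun t : ℝ ↦ (1 - t ^ 2) ^ ((m : ℝ) / 2) * g t :=
    ((continuous_const.sub (continuous_pow 2)).rpow_const fun _ ↦ Or.inr (by positivity)).mul hg
  have hsubst := intervalIntegral.integral_comp_mul_deriv (a := 0) (b := π)
    (fun φ _ ↦ hasDerivAt_cos φ) continuous_sin.neg.continuousOn hcont
  rw [cos_zero, cos_pi] at hsubst
  rw [intervalIntegral.integral_symm, ← hsubst, ← intervalIntegral.integral_neg]
  refine intervalIntegral.integral_congr fun φ hφ ↦ ?_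
  rw [uIcc_of_le pi_pos.le] at hφ
  have hsin : (1 - cos φ ^ 2) ^ ((m : ℝ) / 2) = sin φ ^ m := by
    rw [← sin_sq, rpow_div_two_eq_sqrt _ (sq_nonneg _),
      sqrt_sq (sin_nonneg_of_nonneg_of_le_pi hφ.1 hφ.2), rpow_natCast]
  simp only [Function.comp_apply, hsin]
  ring

theorem exists_orthonormalBasis_apply_eq {E ι : Type*} [NormedAddCommGroup E]
    [InnerProductSpace ℝ E] [FiniteDimensional ℝ E] [Fintype ι]
    (hcard : Module.finrank ℝ E = Fintype.card ι) (i : ι) {v : E} (hv : ‖v‖ = 1) :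
    ∃ b : OrthonormalBasis ι ℝ E, b i = v := by
  have hortho : Orthonormal ℝ (({i} : Set ι).domRestrict fun _ ↦ v) :=
    ⟨fun _ ↦ hv, fun a b hab ↦ absurd (Subsingleton.elim a b) hab⟩
  obtain ⟨b, hb⟩ := hortho.exists_orthonormalBasis_extension_of_card_eq hcard
  exact ⟨b, hb i rfl⟩

theorem setIntegral_closedBall_comp_inner {ι : Type*} [Fintype ι] (i : ι) (f : ℝ → ℝ)
    {ξ : EuclideanSpace ℝ ι} (hξ : ξ ≠ 0) (r : ℝ) :
    ∫ x in Metric.closedBall (0 : EuclideanSpace ℝ ι) r, f (inner ℝ x ξ) =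
      ∫ x in Metric.closedBall (0 : EuclideanSpace ℝ ι) r, f (‖ξ‖ * x i) := by
  have hξ₀ : ‖ξ‖ ≠ 0 := norm_ne_zero_iff.mpr hξ
  have hunit : ‖‖ξ‖⁻¹ • ξ‖ = 1 := by rw [norm_smul, norm_inv, norm_norm, inv_mul_cancel₀ hξ₀]
  obtain ⟨b, hb⟩ := exists_orthonormalBasis_apply_eq finrank_euclideanSpace i hunit
  have hξb : ξ = ‖ξ‖ • b i := by rw [hb, smul_inv_smul₀ hξ₀]
  have hball : b.repr.symm ⁻¹' Metric.closedBall 0 r = Metric.closedBall 0 r := by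
    ext y
    simp
  refine (b.measurePreserving_repr_symm.setIntegral_preimage_emb
    b.repr.symm.toHomeomorph.measurableEmbedding (fun x ↦ f (inner ℝ x ξ)) _).symm.trans ?_
  rw [hball]
  congr 1 with y
  conv_lhs => rw [hξb]
  rw [real_inner_smul_right, real_inner_comm, ← b.repr_apply_apply,
    LinearIsometryEquiv.apply_symm_apply]

theorem besselJ_natCast_succ_div_two (m : ℕ) (x : ℝ) :
    besselJ ((m + 1 : ℕ) / 2) x =
      (x / 2) ^ (((m + 1 : ℕ) : ℝ) / 2) / (Gamma (m / 2 + 1) * √π) *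
        ∫ φ in 0..π, sin φ ^ (m + 1) * cos (x * cos φ) := by
  have horder : 2 * (((m + 1 : ℕ) : ℝ) / 2) = (m + 1 : ℕ) := by ring
  have hgamma : ((m + 1 : ℕ) : ℝ) / 2 + 1 / 2 = m / 2 + 1 := by push_cast; ring
  simp_rw [besselJ, horder, hgamma, rpow_natCast]

/-- the Fourier transform of the indicator of the unit ball in `ℝⁿ`:
`(2π)^{−n/2} ∫_{‖x‖ ≤ 1} cos⟨x, ξ⟩ dx = ‖ξ‖^{−n/2} J_{n/2}(‖ξ‖)` for `ξ ≠ 0`. -/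
theorem stmt9 (n : ℕ) (hn : 1 ≤ n) (ξ : EuclideanSpace ℝ (Fin n)) (hξ : ξ ≠ 0) :
    (2 * Real.pi) ^ (-(n : ℝ) / 2) *
        ∫ x in Metric.closedBall (0 : EuclideanSpace ℝ (Fin n)) 1,
          Real.cos (inner ℝ x ξ : ℝ) =
      ‖ξ‖ ^ (-(n : ℝ) / 2) * besselJ ((n : ℝ) / 2) ‖ξ‖ := by
  obtain ⟨m, rfl⟩ : ∃ m, n = m + 1 := ⟨n - 1, by omega⟩
  rw [setIntegral_closedBall_comp_inner 0 cos hξ,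
    setIntegral_closedBall_comp_zero m (g := fun t ↦ cos (‖ξ‖ * t)) (by fun_prop),
    intervalIntegral_one_sub_sq_rpow_mul m (by fun_prop), besselJ_natCast_succ_div_two]
  set p : ℝ := ((m + 1 : ℕ) : ℝ) / 2
  set I := ∫ φ in 0..π, sin φ ^ (m + 1) * cos (‖ξ‖ * cos φ)
  have hr : ‖ξ‖ ^ (-p) * (‖ξ‖ / 2) ^ p = 2 ^ (-p) := by
    rw [div_rpow (norm_nonneg _) zero_le_two, rpow_neg (norm_nonneg _), rpow_neg zero_le_two]
    field_simp [(rpow_pos_of_pos (norm_pos_iff.mpr hξ) p).ne']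
  have hπ : π ^ (-p) * √π ^ m = (√π)⁻¹ := by
    rw [sqrt_eq_rpow, ← rpow_natCast, ← rpow_mul pi_pos.le, ← rpow_add pi_pos, ← rpow_neg pi_pos.le]
    congr 1
    push_cast [p]
    ring
  rw [neg_div, mul_rpow zero_le_two pi_pos.le]
  linear_combination (2 ^ (-p) * (Gamma (m / 2 + 1))⁻¹ * I) * hπ -
    ((Gamma (m / 2 + 1))⁻¹ * (√π)⁻¹ * I) * hr
end
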